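/- arXiv:2009.09040 — 5 statements merged into one kernel-verified Lean document; each statement's English description precedes it below -/
import Mathlib

section
/- Let n, k ≥ 1. The map h ↦ ĥ, where ĥ(v,ξ) = h(v,ξ,0), is an isometric Hilbert-space isomorphism from A^{(k)}(ℂ^{2n+1}) onto the Segal–Bargmann space Â^{(k)}(ℂ^{2n}) of holomorphic functions F on ℂ^{2n} with ∫_{ℂ^{2n}} |F(v,ξ)|² (k/π)^{2n} e^{−k(‖v‖²+‖ξ‖²)} dμ(v,ξ) < ∞; its inverse sends F ∈ Â^{(k)}(ℂ^{2n}) to the function (v,ξ,ζ) ↦ F(v,ξ). -/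
open MeasureTheory Complex

noncomputable section

abbrev TwSpace (n : ℕ) := (Fin n → ℂ) × (Fin n → ℂ) × ℂ

/-- The weighted measure `dμ_k = (k/π)^{2n} e^{-k(‖v‖²+‖ξ‖²)} (π(1+|ζ|²)²)⁻¹ dμ` on `ℂ^{2n+1}`. -/
def twMeasure (n k : ℕ) : Measure (TwSpace n) :=
  volume.withDensity fun p =>
    ENNReal.ofReal (((k : ℝ) / Real.pi) ^ (2 * n) *
      Real.exp (-(k : ℝ) * ((∑ l, Complex.normSq (p.1 l)) + ∑ l, Complex.normSq (p.2.1 l))) *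
      (Real.pi * (1 + Complex.normSq p.2.2) ^ 2)⁻¹)

abbrev SBSpace (n : ℕ) := (Fin n → ℂ) × (Fin n → ℂ)

/-- The Gaussian measure `dν_k = (k/π)^{2n} e^{-k(‖v‖²+‖ξ‖²)} dμ` on `ℂ^{2n}`. -/
def sbMeasure (n k : ℕ) : Measure (SBSpace n) :=
  volume.withDensity fun q =>
    ENNReal.ofReal (((k : ℝ) / Real.pi) ^ (2 * n) *
      Real.exp (-(k : ℝ) * ((∑ l, Complex.normSq (q.1 l)) + ∑ l, Complex.normSq (q.2 l))))

/-!
Up to reassociating the coordinates, `twMeasure n k` is the product of `sbMeasure n k` with the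
measure of density `(π (1 + |ζ|²)²)⁻¹` on `ℂ`, which has total mass one. So `(v, ξ, ζ) ↦ (v, ξ)`
is measure preserving, and lifting `F` to `(v, ξ, ζ) ↦ F (v, ξ)` preserves `L²` norms.

It remains to see that every `h` in `A^{(k)}` is independent of `ζ`. By Fubini, almost every
fibre `ζ ↦ h (v, ξ, ζ)` is an entire function `f` with `∫ |f|² (1 + |ζ|²)⁻² < ∞`, and such an `f`
is constant. By the generalized mean value property, `R |f w - f 0|` is at most `2 |w|` times the
mean of `|f|` over the circle `|z| = R`. So if `f w ≠ f 0`, the means of `|f|²` over these circles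
grow like `R²`, and in polar coordinates the weighted integral diverges like `∫ dR / R`.
Continuity upgrades "almost every fibre" to "every fibre".
-/

open Set Filter Metric Real

section CircleAverage

variable {E : Type*} [NormedAddCommGroup E]

theorem norm_circleAverage_le [NormedSpace ℝ E] (f : ℂ → E) (c : ℂ) (R : ℝ) :
    ‖circleAverage f c R‖ ≤ circleAverage (fun z => ‖f z‖) c R := by
  rw [circleAverage_def, circleAverage_def, norm_smul, smul_eq_mul,
    Real.norm_of_nonneg (by positivity)]
  gcongr
  exact intervalIntegral.norm_integral_le_integral_norm two_pi_pos.le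

theorem sq_circleAverage_le {g : ℂ → ℝ} {c : ℂ} {R : ℝ} (hg : CircleIntegrable g c R)
    (hg2 : CircleIntegrable (fun z => g z ^ 2) c R) :
    circleAverage g c R ^ 2 ≤ circleAverage (fun z => g z ^ 2) c R := by
  set A := circleAverage g c R
  have amgm : circleAverage (fun z => (2 * A) • g z) c R
      ≤ circleAverage (fun z => A ^ 2 + g z ^ 2) c R :=
    circleAverage_mono (hg.const_smul (a := 2 * A)) ((circleIntegrable_const _ c R).add hg2)
      fun z _ => by simp only [smul_eq_mul]; nlinarith [sq_nonneg (A - g z)]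
  rw [circleAverage_fun_smul, circleAverage_fun_add (circleIntegrable_const _ c R) hg2,
    circleAverage_const, smul_eq_mul] at amgm
  nlinarith

variable [NormedSpace ℂ E] [CompleteSpace E] {f : ℂ → E} {w : ℂ} {R : ℝ}

theorem Differentiable.sub_eq_circleAverage (hf : Differentiable ℂ f) (hw : ‖w‖ < R) :
    f w - f 0 = circleAverage (fun z => (w / (z - w)) • f z) 0 R := by
  have hR : 0 < R := (norm_nonneg w).trans_lt hw
  have hne : ∀ z ∈ sphere (0 : ℂ) |R|, z - w ≠ 0 := fun z hz h => by
    rw [mem_sphere_zero_iff_norm, abs_of_pos hR, sub_eq_zero.1 h] at hz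
    exact hw.ne hz
  have hint : CircleIntegrable (fun z => ((z - 0) / (z - w)) • f z) 0 R :=
    (((continuous_id.sub continuous_const).continuousOn.div
      (continuous_id.sub continuous_const).continuousOn hne).smul
      hf.continuous.continuousOn).circleIntegrable'
  rw [← hf.diffContOnCl.circleAverage_smul_div (c := 0) (R := R)
      (by rwa [mem_ball_zero_iff, abs_of_pos hR]),
    ← hf.diffContOnCl.circleAverage (R := R),
    ← circleAverage_fun_sub hint hf.continuous.continuousOn.circleIntegrable']
  refine circleAverage_congr_sphere fun z hz => ?_
  rw [sub_zero, show w / (z - w) = z / (z - w) - 1 by rw [div_sub_one (hne z hz), sub_sub_cancel],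
    sub_smul, one_smul]

theorem Differentiable.mul_norm_sub_le_circleAverage (hf : Differentiable ℂ f) (hR : 0 < R)
    (hwR : 2 * ‖w‖ ≤ R) :
    R * ‖f w - f 0‖ ≤ 2 * ‖w‖ * circleAverage (fun z => ‖f z‖) 0 R := by
  have hsphere : ∀ z ∈ sphere (0 : ℂ) |R|, R / 2 ≤ ‖z - w‖ := fun z hz => by
    rw [mem_sphere_zero_iff_norm, abs_of_pos hR] at hz
    linarith [norm_sub_norm_le z w]
  have hne : ∀ z ∈ sphere (0 : ℂ) |R|, z - w ≠ 0 := fun z hz =>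
    norm_pos_iff.1 ((half_pos hR).trans_le (hsphere z hz))
  have hbound : ∀ z ∈ sphere (0 : ℂ) |R|, ‖(w / (z - w)) • f z‖ ≤ (2 * ‖w‖ / R) * ‖f z‖ :=
    fun z hz => by
      rw [norm_smul, norm_div]
      refine mul_le_mul_of_nonneg_right ?_ (norm_nonneg _)
      rw [div_le_div_iff₀ (by linarith [hsphere z hz]) hR]
      nlinarith [hsphere z hz, norm_nonneg w]
  have hmono := circleAverage_mono
    ((continuousOn_const.div (continuous_id.sub continuous_const).continuousOn hne).smul
      hf.continuous.continuousOn).norm.circleIntegrable'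
    (continuous_const.mul hf.continuous.norm).continuousOn.circleIntegrable' hbound
  have hpull : circleAverage (fun z => (2 * ‖w‖ / R) * ‖f z‖) 0 R
      = 2 * ‖w‖ / R * circleAverage (fun z => ‖f z‖) 0 R :=
    circleAverage_fun_smul (a := 2 * ‖w‖ / R) (f := fun z => ‖f z‖)
  calc R * ‖f w - f 0‖
      = R * ‖circleAverage (fun z => (w / (z - w)) • f z) 0 R‖ := by
        rw [hf.sub_eq_circleAverage (R := R) (by linarith [norm_nonneg w])]
    _ ≤ R * (2 * ‖w‖ / R * circleAverage (fun z => ‖f z‖) 0 R) :=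
        mul_le_mul_of_nonneg_left ((norm_circleAverage_le _ _ _).trans (hpull ▸ hmono)) hR.le
    _ = 2 * ‖w‖ * circleAverage (fun z => ‖f z‖) 0 R := by field_simp

theorem Differentiable.sq_mul_norm_sub_le_circleAverage (hf : Differentiable ℂ f) (hR : 0 < R)
    (hwR : 2 * ‖w‖ ≤ R) :
    (R * ‖f w - f 0‖) ^ 2 ≤ (2 * ‖w‖) ^ 2 * circleAverage (fun z => ‖f z‖ ^ 2) 0 R := by
  have hnorm : Continuous fun z => ‖f z‖ := hf.continuous.norm
  calc (R * ‖f w - f 0‖) ^ 2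
      ≤ (2 * ‖w‖ * circleAverage (fun z => ‖f z‖) 0 R) ^ 2 :=
        pow_le_pow_left₀ (by positivity) (hf.mul_norm_sub_le_circleAverage hR hwR) 2
    _ = (2 * ‖w‖) ^ 2 * circleAverage (fun z => ‖f z‖) 0 R ^ 2 := mul_pow _ _ _
    _ ≤ (2 * ‖w‖) ^ 2 * circleAverage (fun z => ‖f z‖ ^ 2) 0 R := by
        gcongr
        exact sq_circleAverage_le hnorm.continuousOn.circleIntegrable'
          (hnorm.pow 2).continuousOn.circleIntegrable'

end CircleAverage

theorem Complex.polarCoord_symm_eq_circleMap (p : ℝ × ℝ) :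
    Complex.polarCoord.symm p = circleMap 0 p.1 p.2 := by
  rw [Complex.polarCoord_symm_apply, circleMap, Complex.exp_mul_I]
  simp [Complex.ofReal_cos, Complex.ofReal_sin]

theorem lintegral_ofReal_eq_lintegral_Ioi_circleAverage {g : ℂ → ℝ} (hg : Continuous g)
    (hg₀ : ∀ z, 0 ≤ g z) :
    ∫⁻ z, ENNReal.ofReal (g z)
      = ∫⁻ r in Ioi 0, ENNReal.ofReal (2 * π * r * circleAverage g 0 r) := by
  rw [← Complex.lintegral_comp_polarCoord_symm (fun z => ENNReal.ofReal (g z)), polarCoord_target,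
    Measure.volume_eq_prod, ← Measure.prod_restrict]
  simp_rw [Complex.polarCoord_symm_eq_circleMap, smul_eq_mul]
  have hmeas : Measurable fun p : ℝ × ℝ =>
      ENNReal.ofReal p.1 * ENNReal.ofReal (g (circleMap 0 p.1 p.2)) :=
    measurable_fst.ennreal_ofReal.mul (hg.comp circleMap.continuous).measurable.ennreal_ofReal
  rw [lintegral_prod _ hmeas.aemeasurable]
  refine setLIntegral_congr_fun measurableSet_Ioi fun r hr => ?_
  have hper : Function.Periodic (fun θ => g (circleMap 0 r θ)) (2 * π) :=
    fun θ => by simp [periodic_circleMap 0 r θ]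
  have hangular : ∫ θ in Ioo (-π) π, g (circleMap 0 r θ) = 2 * π * circleAverage g 0 r := by
    rw [circleAverage_def, smul_eq_mul, ← mul_assoc, mul_inv_cancel₀ (by positivity), one_mul,
      ← integral_Ioc_eq_integral_Ioo, ← intervalIntegral.integral_of_le (by linarith [pi_pos]),
      ← zero_add (2 * π), ← hper.intervalIntegral_add_eq (-π) 0]
    ring_nf
  dsimp only
  rw [lintegral_const_mul' _ _ ENNReal.ofReal_ne_top, ← ofReal_integral_eq_lintegral_ofReal,
    hangular, ← ENNReal.ofReal_mul (le_of_lt hr)]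
  · ring_nf
  · exact (hg.comp (continuous_circleMap 0 r)).integrableOn_Icc.mono_set Ioo_subset_Icc_self
  · exact Eventually.of_forall fun θ => hg₀ _

theorem lintegral_Ioi_two_mul_div_one_add_sq_sq :
    ∫⁻ r in Ioi (0 : ℝ), ENNReal.ofReal (2 * r / (1 + r ^ 2) ^ 2) = 1 := by
  have hderiv : ∀ x ∈ Ici (0 : ℝ),
      HasDerivAt (fun r => -(1 + r ^ 2)⁻¹) (2 * x / (1 + x ^ 2) ^ 2) x := fun x _ => by
    refine (((hasDerivAt_pow 2 x).const_add 1).inv (by positivity)).neg.congr_deriv ?_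
    simp only [Nat.cast_ofNat, Nat.add_one_sub_one, pow_one]
    field_simp
  have hnonneg : ∀ x ∈ Ioi (0 : ℝ), 0 ≤ 2 * x / (1 + x ^ 2) ^ 2 := fun x (hx : 0 < x) => by
    positivity
  have hlim : Tendsto (fun r : ℝ => -(1 + r ^ 2)⁻¹) atTop (nhds (-0)) :=
    (tendsto_inv_atTop_zero.comp
      (tendsto_atTop_add_const_left _ 1 (tendsto_pow_atTop two_ne_zero))).neg
  rw [neg_zero] at hlim
  rw [← ofReal_integral_eq_lintegral_ofReal (integrableOn_Ioi_deriv_of_nonneg' hderiv hnonneg hlim)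
    ((ae_restrict_iff' measurableSet_Ioi).2 (Eventually.of_forall hnonneg)),
    integral_Ioi_of_hasDerivAt_of_nonneg' hderiv hnonneg hlim]
  norm_num

theorem lintegral_Ioi_ofReal_inv_eq_top {a : ℝ} (ha : 0 < a) :
    ∫⁻ r in Ioi a, ENNReal.ofReal r⁻¹ = ⊤ := by
  by_contra h
  refine not_integrableOn_Ioi_inv (a := a) ⟨by fun_prop, ?_⟩
  rw [hasFiniteIntegral_iff_ofReal ((ae_restrict_iff' measurableSet_Ioi).2
    (Eventually.of_forall fun r (hr : a < r) => inv_nonneg.2 (ha.trans hr).le))]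
  exact lt_top_iff_ne_top.2 h

/-- The `ζ`-factor of the density of `twMeasure`, i.e. the Fubini–Study area form of `ℂ ⊂ ℙ¹`. -/
def sphericalDensity (ζ : ℂ) : ℝ := (π * (1 + normSq ζ) ^ 2)⁻¹

def sphericalMeasure : Measure ℂ :=
  volume.withDensity fun ζ => ENNReal.ofReal (sphericalDensity ζ)

theorem sphericalDensity_pos (ζ : ℂ) : 0 < sphericalDensity ζ :=
  inv_pos.2 (mul_pos pi_pos (pow_pos (by linarith [normSq_nonneg ζ]) 2))

@[fun_prop]
theorem continuous_sphericalDensity : Continuous sphericalDensity :=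
  Continuous.inv₀ (by fun_prop) fun ζ => (inv_pos.1 (sphericalDensity_pos ζ)).ne'

theorem circleAverage_mul_sphericalDensity (g : ℂ → ℝ) (r : ℝ) :
    circleAverage (fun z => g z * sphericalDensity z) 0 r
      = (π * (1 + r ^ 2) ^ 2)⁻¹ * circleAverage g 0 r := by
  rw [← smul_eq_mul, ← circleAverage_fun_smul]
  refine circleAverage_congr_sphere fun z hz => ?_
  rw [mem_sphere_zero_iff_norm] at hz
  rw [sphericalDensity, normSq_eq_norm_sq, hz, sq_abs, smul_eq_mul, mul_comm]

theorem lintegral_sphericalMeasure_ofReal {g : ℂ → ℝ} (hg : Continuous g) (hg₀ : ∀ z, 0 ≤ g z) :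
    ∫⁻ z, ENNReal.ofReal (g z) ∂sphericalMeasure
      = ∫⁻ r in Ioi 0, ENNReal.ofReal (2 * r / (1 + r ^ 2) ^ 2 * circleAverage g 0 r) := by
  rw [sphericalMeasure, lintegral_withDensity_eq_lintegral_mul _
    continuous_sphericalDensity.measurable.ennreal_ofReal hg.measurable.ennreal_ofReal]
  simp_rw [Pi.mul_apply, ← ENNReal.ofReal_mul (sphericalDensity_pos _).le,
    mul_comm (sphericalDensity _)]
  rw [lintegral_ofReal_eq_lintegral_Ioi_circleAverage (by fun_prop)
    fun z => mul_nonneg (hg₀ z) (sphericalDensity_pos z).le]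
  refine setLIntegral_congr_fun measurableSet_Ioi fun r _ => ?_
  rw [circleAverage_mul_sphericalDensity]
  congr 1
  field_simp

instance : IsProbabilityMeasure sphericalMeasure := by
  constructor
  have h := lintegral_sphericalMeasure_ofReal (g := fun _ => 1) continuous_const
    fun _ => zero_le_one
  simp only [ENNReal.ofReal_one, lintegral_one, circleAverage_const, mul_one] at h
  rw [h, lintegral_Ioi_two_mul_div_one_add_sq_sq]

section Liouville

variable {E : Type*} [NormedAddCommGroup E] [NormedSpace ℂ E] [CompleteSpace E]

theorem Differentiable.apply_eq_apply_zero_of_memLp_sphericalMeasure {f : ℂ → E}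
    (hf : Differentiable ℂ f) (hL2 : MemLp f 2 sphericalMeasure) (w : ℂ) : f w = f 0 := by
  by_contra hne
  have hη : 0 < ‖f w - f 0‖ := norm_pos_iff.2 (sub_ne_zero.2 hne)
  have hw : 0 < ‖w‖ := norm_pos_iff.2 fun h => hne (h ▸ rfl)
  set c := ‖f w - f 0‖ ^ 2 / (8 * ‖w‖ ^ 2)
  set R₀ := max 1 (2 * ‖w‖)
  have hlower : ∀ r ∈ Ioi R₀, ENNReal.ofReal (c * r⁻¹)
      ≤ ENNReal.ofReal (2 * r / (1 + r ^ 2) ^ 2 * circleAverage (fun z => ‖f z‖ ^ 2) 0 r) := by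
    intro r hr
    have hr1 : 1 ≤ r := (le_max_left _ _).trans hr.le
    have hgrowth := hf.sq_mul_norm_sub_le_circleAverage (w := w) (by linarith)
      ((le_max_right _ _).trans hr.le)
    have hquartic : (1 + r ^ 2) ^ 2 ≤ 4 * r ^ 4 :=
      calc (1 + r ^ 2) ^ 2 ≤ (2 * r ^ 2) ^ 2 := pow_le_pow_left₀ (by positivity) (by nlinarith) 2
        _ = 4 * r ^ 4 := by ring
    refine ENNReal.ofReal_le_ofReal ?_
    calc c * r⁻¹ ≤ 2 * r / (1 + r ^ 2) ^ 2 * ((r * ‖f w - f 0‖) ^ 2 / (2 * ‖w‖) ^ 2) := by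
          simp only [c]
          field_simp
          linarith
      _ ≤ 2 * r / (1 + r ^ 2) ^ 2 * circleAverage (fun z => ‖f z‖ ^ 2) 0 r := by
          gcongr
          rwa [div_le_iff₀' (by positivity)]
  have hfin : ∫⁻ z, ENNReal.ofReal (‖f z‖ ^ 2) ∂sphericalMeasure < ⊤ :=
    ((memLp_two_iff_integrable_sq_norm hL2.1).1 hL2).lintegral_lt_top
  rw [lintegral_sphericalMeasure_ofReal (g := fun z => ‖f z‖ ^ 2) (hf.continuous.norm.pow 2)
    fun z => by positivity] at hfin
  refine hfin.ne (eq_top_iff.2 ?_)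
  calc ⊤ = ENNReal.ofReal c * ∫⁻ r in Ioi R₀, ENNReal.ofReal r⁻¹ := by
        rw [lintegral_Ioi_ofReal_inv_eq_top (by positivity), ENNReal.mul_top (by positivity)]
    _ = ∫⁻ r in Ioi R₀, ENNReal.ofReal (c * r⁻¹) := by
        rw [← lintegral_const_mul' _ _ ENNReal.ofReal_ne_top]
        refine setLIntegral_congr_fun measurableSet_Ioi fun r _ => ?_
        rw [ENNReal.ofReal_mul (by positivity)]
    _ ≤ ∫⁻ r in Ioi R₀, ENNReal.ofReal
          (2 * r / (1 + r ^ 2) ^ 2 * circleAverage (fun z => ‖f z‖ ^ 2) 0 r) :=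
        setLIntegral_mono' measurableSet_Ioi hlower
    _ ≤ _ := lintegral_mono_set (Ioi_subset_Ioi (by positivity))

theorem ae_forall_apply_eq_of_memLp_prod_sphericalMeasure {X : Type*} [MeasurableSpace X]
    {μ : Measure X} [SFinite μ] {F : X × ℂ → E} (hF : MemLp F 2 (μ.prod sphericalMeasure))
    (hd : ∀ x, Differentiable ℂ fun ζ => F (x, ζ)) :
    ∀ᵐ x ∂μ, ∀ ζ, F (x, ζ) = F (x, 0) := by
  filter_upwards [((memLp_two_iff_integrable_sq_norm hF.1).1 hF).prod_right_ae] with x hx ζ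
  exact (hd x).apply_eq_apply_zero_of_memLp_sphericalMeasure
    ((memLp_two_iff_integrable_sq_norm (hd x).continuous.aestronglyMeasurable).2 hx) ζ

end Liouville

section SegalBargmann

variable (n k : ℕ)

theorem twMeasure_eq_map_prod :
    twMeasure n k = ((sbMeasure n k).prod sphericalMeasure).map MeasurableEquiv.prodAssoc := by
  refine Measure.ext_of_lintegral _ fun φ hφ => ?_
  rw [lintegral_map_equiv, sbMeasure, sphericalMeasure,
    prod_withDensity (by fun_prop) (by fun_prop), ← Measure.volume_eq_prod,
    lintegral_withDensity_eq_lintegral_mul _ (by fun_prop)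
      (g := fun z => φ (MeasurableEquiv.prodAssoc z)) (by fun_prop),
    twMeasure, lintegral_withDensity_eq_lintegral_mul _ (by fun_prop) hφ,
    ← volume_preserving_prodAssoc.lintegral_comp_emb (MeasurableEquiv.measurableEmbedding _)]
  refine lintegral_congr fun z => ?_
  simp only [Pi.mul_apply]
  rw [← ENNReal.ofReal_mul (by positivity)]
  rfl

instance : SFinite (sbMeasure n k) := by
  unfold sbMeasure; infer_instance

theorem measurePreserving_twMeasure_sbMeasure :
    MeasurePreserving (fun p : TwSpace n => (p.1, p.2.1)) (twMeasure n k) (sbMeasure n k) where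
  measurable := by fun_prop
  map_eq := by
    rw [twMeasure_eq_map_prod, Measure.map_map (by fun_prop) (MeasurableEquiv.measurable _)]
    exact Measure.map_fst_prod.trans (by simp)

variable {n k} {E : Type*} [NormedAddCommGroup E]

theorem memLp_comp_twMeasure_iff {F : SBSpace n → E} (hF : AEStronglyMeasurable F (sbMeasure n k))
    {p : ENNReal} :
    MemLp (fun x : TwSpace n => F (x.1, x.2.1)) p (twMeasure n k) ↔ MemLp F p (sbMeasure n k) := by
  have hproj := measurePreserving_twMeasure_sbMeasure n k
  rw [← hproj.map_eq] at hF ⊢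
  exact (memLp_map_measure_iff hF hproj.aemeasurable).symm

theorem integral_comp_twMeasure [NormedSpace ℝ E] {G : SBSpace n → E}
    (hG : AEStronglyMeasurable G (sbMeasure n k)) :
    ∫ x : TwSpace n, G (x.1, x.2.1) ∂(twMeasure n k) = ∫ q, G q ∂(sbMeasure n k) := by
  have hproj := measurePreserving_twMeasure_sbMeasure n k
  rw [← hproj.map_eq] at hG ⊢
  exact (integral_map hproj.aemeasurable hG).symm

theorem isOpenPosMeasure_sbMeasure (hk : k ≠ 0) : (sbMeasure n k).IsOpenPosMeasure :=
  (withDensity_absolutelyContinuous' (by fun_prop) (Eventually.of_forall fun q => by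
    have : (0 : ℝ) < k := Nat.cast_pos.2 (Nat.pos_of_ne_zero hk)
    simp only [ne_eq, ENNReal.ofReal_eq_zero, not_le]
    positivity)).isOpenPosMeasure

theorem Differentiable.apply_eq_of_memLp_twMeasure [NormedSpace ℂ E] [CompleteSpace E]
    (hk : k ≠ 0) {h : TwSpace n → E} (hd : Differentiable ℂ h) (hL2 : MemLp h 2 (twMeasure n k))
    (p : TwSpace n) : h (p.1, p.2.1, 0) = h p := by
  have hassoc : MeasurePreserving MeasurableEquiv.prodAssoc
      ((sbMeasure n k).prod sphericalMeasure) (twMeasure n k) :=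
    ⟨MeasurableEquiv.measurable _, (twMeasure_eq_map_prod n k).symm⟩
  have hfiber := ae_forall_apply_eq_of_memLp_prod_sphericalMeasure
    (hL2.comp_measurePreserving hassoc) fun q => hd.comp
      ((differentiable_const q.1).prodMk ((differentiable_const q.2).prodMk differentiable_id))
  have := isOpenPosMeasure_sbMeasure (n := n) hk
  have hc := hd.continuous
  have hslice : (fun q : SBSpace n => h (q.1, q.2, p.2.2)) = fun q => h (q.1, q.2, 0) :=
    (Continuous.ae_eq_iff_eq _ (by fun_prop) (by fun_prop)).1 (hfiber.mono fun q hq => hq p.2.2)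
  exact (congrFun hslice (p.1, p.2.1)).symm

end SegalBargmann

theorem bergman_iso_segalBargmann_general (n k : ℕ) (hk : 1 ≤ k) :
    (∀ h : TwSpace n → ℂ, Differentiable ℂ h → MemLp h 2 (twMeasure n k) →
      Differentiable ℂ (fun q : SBSpace n => h (q.1, q.2, 0)) ∧
      MemLp (fun q : SBSpace n => h (q.1, q.2, 0)) 2 (sbMeasure n k) ∧
      ∫ q, ‖h (q.1, q.2, 0)‖ ^ 2 ∂(sbMeasure n k) = ∫ p, ‖h p‖ ^ 2 ∂(twMeasure n k)) ∧
    (∀ F : SBSpace n → ℂ, Differentiable ℂ F → MemLp F 2 (sbMeasure n k) →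
      Differentiable ℂ (fun p : TwSpace n => F (p.1, p.2.1)) ∧
      MemLp (fun p : TwSpace n => F (p.1, p.2.1)) 2 (twMeasure n k) ∧
      ∫ p, ‖F (p.1, p.2.1)‖ ^ 2 ∂(twMeasure n k) = ∫ q, ‖F q‖ ^ 2 ∂(sbMeasure n k)) ∧
    (∀ h : TwSpace n → ℂ, Differentiable ℂ h → MemLp h 2 (twMeasure n k) →
      ∀ p : TwSpace n, h (p.1, p.2.1, 0) = h p) ∧
    (∀ F : SBSpace n → ℂ, ∀ q : SBSpace n, F ((q.1, q.2, (0:ℂ)).1, (q.1, q.2, (0:ℂ)).2.1) = F q) := by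
  have hconst : ∀ h : TwSpace n → ℂ, Differentiable ℂ h → MemLp h 2 (twMeasure n k) →
      ∀ p : TwSpace n, h (p.1, p.2.1, 0) = h p :=
    fun h hd hL2 => hd.apply_eq_of_memLp_twMeasure (by omega) hL2
  refine ⟨fun h hd hL2 => ?_, fun F hd hL2 => ?_, hconst, fun F q => rfl⟩
  · have hd₀ : Differentiable ℂ fun q : SBSpace n => h (q.1, q.2, 0) := hd.comp (by fun_prop)
    have hlift : (fun p : TwSpace n => h (p.1, p.2.1, 0)) = h := funext (hconst h hd hL2)
    refine ⟨hd₀, (memLp_comp_twMeasure_iff hd₀.continuous.aestronglyMeasurable).1 (hlift ▸ hL2),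
      ?_⟩
    calc ∫ q, ‖h (q.1, q.2, 0)‖ ^ 2 ∂(sbMeasure n k)
        = ∫ p : TwSpace n, ‖h (p.1, p.2.1, 0)‖ ^ 2 ∂(twMeasure n k) :=
          (integral_comp_twMeasure (hd₀.continuous.norm.pow 2).aestronglyMeasurable).symm
      _ = ∫ p, ‖h p‖ ^ 2 ∂(twMeasure n k) := by simp only [hconst h hd hL2]
  · exact ⟨hd.comp (by fun_prop),
      (memLp_comp_twMeasure_iff hd.continuous.aestronglyMeasurable).2 hL2,
      integral_comp_twMeasure (hd.continuous.norm.pow 2).aestronglyMeasurable⟩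

/-- The map `h ↦ ĥ`, `ĥ(v,ξ) = h(v,ξ,0)`, is an isometric isomorphism from
`A^{(k)}(ℂ^{2n+1})` onto the Segal–Bargmann space `Â^{(k)}(ℂ^{2n})` of Gaussian-square-integrable
holomorphic functions on `ℂ^{2n}`; its inverse sends `F` to the function `(v,ξ,ζ) ↦ F(v,ξ)`. -/
theorem bergman_iso_segalBargmann (n k : ℕ) (hn : 1 ≤ n) (hk : 1 ≤ k) :
    (∀ h : TwSpace n → ℂ, Differentiable ℂ h → MemLp h 2 (twMeasure n k) →
      Differentiable ℂ (fun q : SBSpace n => h (q.1, q.2, 0)) ∧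
      MemLp (fun q : SBSpace n => h (q.1, q.2, 0)) 2 (sbMeasure n k) ∧
      ∫ q, ‖h (q.1, q.2, 0)‖ ^ 2 ∂(sbMeasure n k) = ∫ p, ‖h p‖ ^ 2 ∂(twMeasure n k)) ∧
    (∀ F : SBSpace n → ℂ, Differentiable ℂ F → MemLp F 2 (sbMeasure n k) →
      Differentiable ℂ (fun p : TwSpace n => F (p.1, p.2.1)) ∧
      MemLp (fun p : TwSpace n => F (p.1, p.2.1)) 2 (twMeasure n k) ∧
      ∫ p, ‖F (p.1, p.2.1)‖ ^ 2 ∂(twMeasure n k) = ∫ q, ‖F q‖ ^ 2 ∂(sbMeasure n k)) ∧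
    (∀ h : TwSpace n → ℂ, Differentiable ℂ h → MemLp h 2 (twMeasure n k) →
      ∀ p : TwSpace n, h (p.1, p.2.1, 0) = h p) ∧
    (∀ F : SBSpace n → ℂ, ∀ q : SBSpace n, F ((q.1, q.2, (0:ℂ)).1, (q.1, q.2, (0:ℂ)).2.1) = F q) :=
  bergman_iso_segalBargmann_general n k hk
end
end

section
/- Let n ≥ 1 and let (a₁,b₁,c₁), (a₂,b₂,c₂) ∈ ℝ³ with a₁²+b₁²+c₁² = 1 and a₂²+b₂²+c₂² = 1. Then there exists an invertible real 4n×4n matrix A satisfying AI = IA and A·(a₂I + b₂J + c₂K) = (a₁I + b₁J + c₁K)·A if and only if a₁ = a₂. -/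
/-!
Write `Q = aI + bJ + cK`. As `I` anticommutes with `J` and `K`, `IQ + QI = -2a`, and conjugation by
a map commuting with `I` preserves this anticommutator; this forces `a₁ = a₂`. Conversely, `p + rI`
commutes with `I` and conjugates `bJ + cK` by the rotation through twice the argument of `p + ri`,
so when `b₁² + c₁² = b₂² + c₂²` a suitable `p + rI` carries `Q₂` to `Q₁`. Everything takes place in
an arbitrary algebra with a quaternion basis `I, J, K`.
-/

noncomputable section

abbrev R4Space (n : ℕ) := (Fin n → ℝ) × (Fin n → ℝ) × (Fin n → ℝ) × (Fin n → ℝ)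

/-- The standard linear complex structure `I` on `ℝ^{4n}`:
`(x₁,x₂,x₃,x₄) ↦ (−x₂, x₁, −x₄, x₃)`. -/
def Iop (n : ℕ) : R4Space n →ₗ[ℝ] R4Space n where
  toFun x := (-x.2.1, x.1, -x.2.2.2, x.2.2.1)
  map_add' x y := by simp [Prod.ext_iff, neg_add, add_comm]
  map_smul' c x := by simp [Prod.ext_iff, smul_neg]

/-- The standard linear complex structure `J` on `ℝ^{4n}`:
`(x₁,x₂,x₃,x₄) ↦ (−x₃, x₄, x₁, −x₂)`. -/
def Jop (n : ℕ) : R4Space n →ₗ[ℝ] R4Space n where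
  toFun x := (-x.2.2.1, x.2.2.2, x.1, -x.2.1)
  map_add' x y := by simp [Prod.ext_iff, neg_add, add_comm]
  map_smul' c x := by simp [Prod.ext_iff, smul_neg]

/-- The standard linear complex structure `K` on `ℝ^{4n}`:
`(x₁,x₂,x₃,x₄) ↦ (−x₄, −x₃, x₂, x₁)`. -/
def Kop (n : ℕ) : R4Space n →ₗ[ℝ] R4Space n where
  toFun x := (-x.2.2.2, -x.2.2.1, x.2.1, x.1)
  map_add' x y := by simp [Prod.ext_iff, neg_add, add_comm]
  map_smul' c x := by simp [Prod.ext_iff, smul_neg]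

end

-- In complex coordinates `z = b + ci`, `w = p + ri` the two equations say `w z₂ = z₁ w̄`; this
-- holds for `w = z̄₂ (z₁ + z₂)`, which vanishes only when `z₁ = -z₂`, where `w = i` works.
theorem exists_rotation_of_sq_add_sq_eq {K : Type*} [Field K] [LinearOrder K]
    [IsStrictOrderedRing K] {b₁ c₁ b₂ c₂ : K} (h : b₁ ^ 2 + c₁ ^ 2 = b₂ ^ 2 + c₂ ^ 2) :
    ∃ p r : K, p ^ 2 + r ^ 2 ≠ 0 ∧
      p * b₂ - r * c₂ = p * b₁ + r * c₁ ∧ p * c₂ + r * b₂ = p * c₁ - r * b₁ := by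
  by_cases hopp : b₁ = -b₂ ∧ c₁ = -c₂
  · exact ⟨0, 1, by norm_num, by linear_combination -hopp.2, by linear_combination hopp.1⟩
  have hp : b₁ * b₂ + c₁ * c₂ + b₂ ^ 2 + c₂ ^ 2 ≠ 0 := by
    intro hp
    have hsq : (b₁ + b₂) ^ 2 + (c₁ + c₂) ^ 2 = 0 := by linear_combination h + 2 * hp
    obtain ⟨hb, hc⟩ := (add_eq_zero_iff_of_nonneg (sq_nonneg _) (sq_nonneg _)).1 hsq
    exact hopp ⟨eq_neg_of_add_eq_zero_left (pow_eq_zero_iff two_ne_zero |>.1 hb),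
      eq_neg_of_add_eq_zero_left (pow_eq_zero_iff two_ne_zero |>.1 hc)⟩
  exact ⟨b₁ * b₂ + c₁ * c₂ + b₂ ^ 2 + c₂ ^ 2, c₁ * b₂ - b₁ * c₂, by positivity,
    by linear_combination -b₂ * h, by linear_combination -c₂ * h⟩

namespace QuaternionAlgebra.Basis

variable {K A : Type*} [Ring A]

section Field

variable [Field K] [Algebra K A]

def pure (q : Basis A (-1 : K) 0 (-1)) (a b c : K) : A := a • q.i + b • q.j + c • q.k

variable (q : Basis A (-1 : K) 0 (-1))

theorem i_mul_pure_add_pure_mul_i (a b c : K) :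
    q.i * q.pure a b c + q.pure a b c * q.i = algebraMap K A (-2 * a) := by
  simp only [pure, mul_add, add_mul, mul_smul_comm, smul_mul_assoc, q.i_mul_i, q.i_mul_j,
    q.j_mul_i, q.i_mul_k, q.k_mul_i, Algebra.algebraMap_eq_smul_one]
  module

theorem eq_of_isUnit_conj [NeZero (2 : K)] [Nontrivial A] {u : A} (hu : IsUnit u)
    {a₁ b₁ c₁ a₂ b₂ c₂ : K} (hi : u * q.i = q.i * u)
    (hconj : u * q.pure a₂ b₂ c₂ = q.pure a₁ b₁ c₁ * u) : a₁ = a₂ := by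
  have key : algebraMap K A (-2 * a₂) * u = algebraMap K A (-2 * a₁) * u := calc
    _ = u * (q.i * q.pure a₂ b₂ c₂ + q.pure a₂ b₂ c₂ * q.i) := by
      rw [q.i_mul_pure_add_pure_mul_i, Algebra.commutes]
    _ = (q.i * q.pure a₁ b₁ c₁ + q.pure a₁ b₁ c₁ * q.i) * u := by
      rw [mul_add, ← mul_assoc, hi, mul_assoc, hconj, ← mul_assoc, ← mul_assoc u, hconj,
        mul_assoc _ u, hi, ← mul_assoc, add_mul]
    _ = _ := by rw [q.i_mul_pure_add_pure_mul_i]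
  have := (algebraMap K A).injective (hu.mul_right_cancel key)
  exact (mul_left_cancel₀ (neg_ne_zero.2 two_ne_zero) this).symm

theorem smul_one_add_smul_i_mul_pure {p r a b₁ c₁ b₂ c₂ : K}
    (hj : p * b₂ - r * c₂ = p * b₁ + r * c₁) (hk : p * c₂ + r * b₂ = p * c₁ - r * b₁) :
    (p • 1 + r • q.i) * q.pure a b₂ c₂ = q.pure a b₁ c₁ * (p • 1 + r • q.i) := by
  simp only [pure, mul_add, add_mul, mul_smul_comm, smul_mul_assoc, q.i_mul_i, q.i_mul_j,
    q.j_mul_i, q.i_mul_k, q.k_mul_i, one_mul, mul_one, smul_smul]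
  linear_combination (norm := module) hj • q.j + hk • q.k

theorem isUnit_smul_one_add_smul_i {p r : K} (h : p ^ 2 + r ^ 2 ≠ 0) :
    IsUnit (p • 1 + r • q.i) := by
  refine ⟨⟨p • 1 + r • q.i, (p ^ 2 + r ^ 2)⁻¹ • (p • 1 - r • q.i), ?_, ?_⟩, rfl⟩ <;>
  · simp only [mul_smul_comm, smul_mul_assoc, mul_sub, sub_mul, mul_add, add_mul, one_mul,
      mul_one, q.i_mul_i, smul_smul]
    linear_combination (norm := module) inv_mul_cancel₀ h • (1 : A)

end Field

section LinearOrderedField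

variable [Field K] [LinearOrder K] [IsStrictOrderedRing K] [Algebra K A]
  (q : Basis A (-1 : K) 0 (-1))

theorem exists_isUnit_conj {b₁ c₁ b₂ c₂ : K} (h : b₁ ^ 2 + c₁ ^ 2 = b₂ ^ 2 + c₂ ^ 2) (a : K) :
    ∃ u : A, IsUnit u ∧ u * q.i = q.i * u ∧ u * q.pure a b₂ c₂ = q.pure a b₁ c₁ * u := by
  obtain ⟨p, r, hpr, hj, hk⟩ := exists_rotation_of_sq_add_sq_eq h
  refine ⟨p • 1 + r • q.i, q.isUnit_smul_one_add_smul_i hpr, ?_,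
    q.smul_one_add_smul_i_mul_pure hj hk⟩
  exact (((Commute.one_left q.i).smul_left p).add_left ((Commute.refl q.i).smul_left r)).eq

end LinearOrderedField

end QuaternionAlgebra.Basis

def quaternionBasis (n : ℕ) :
    QuaternionAlgebra.Basis (Module.End ℝ (R4Space n)) (-1 : ℝ) 0 (-1) where
  i := Iop n
  j := Jop n
  k := Kop n
  i_mul_i := by ext <;> simp [Iop]
  j_mul_j := by ext <;> simp [Jop]
  i_mul_j := by ext <;> simp [Iop, Jop, Kop]
  j_mul_i := by ext <;> simp [Iop, Jop, Kop]

/-- For unit vectors `(a₁,b₁,c₁)`, `(a₂,b₂,c₂)` in `ℝ³`, the induced complex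
structures `a₁I+b₁J+c₁K` and `a₂I+b₂J+c₂K` on `ℝ^{4n}` are conjugate by an invertible real-linear
map commuting with `I` (i.e. by an element of `GL(2n,ℂ)`) if and only if `a₁ = a₂`. -/
theorem conjugate_by_complex_linear_iff
    (n : ℕ) (hn : 1 ≤ n) (a₁ b₁ c₁ a₂ b₂ c₂ : ℝ)
    (h₁ : a₁ ^ 2 + b₁ ^ 2 + c₁ ^ 2 = 1) (h₂ : a₂ ^ 2 + b₂ ^ 2 + c₂ ^ 2 = 1) :
    (∃ A : R4Space n ≃ₗ[ℝ] R4Space n,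
        A.toLinearMap ∘ₗ Iop n = Iop n ∘ₗ A.toLinearMap ∧
        A.toLinearMap ∘ₗ (a₂ • Iop n + b₂ • Jop n + c₂ • Kop n)
          = (a₁ • Iop n + b₁ • Jop n + c₁ • Kop n) ∘ₗ A.toLinearMap) ↔ a₁ = a₂ := by
  constructor
  · rintro ⟨A, hI, hconj⟩
    have : Nonempty (Fin n) := ⟨⟨0, hn⟩⟩
    exact (quaternionBasis n).eq_of_isUnit_conj ((Module.End.isUnit_iff _).2 A.bijective) hI hconj
  · rintro rfl
    obtain ⟨u, hu, hI, hconj⟩ :=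
      (quaternionBasis n).exists_isUnit_conj (by linarith : b₁ ^ 2 + c₁ ^ 2 = b₂ ^ 2 + c₂ ^ 2) a₁
    refine ⟨LinearMap.GeneralLinearGroup.generalLinearEquiv ℝ _ hu.unit, ?_, ?_⟩ <;>
      rw [LinearMap.GeneralLinearGroup.generalLinearEquiv_to_linearMap, IsUnit.unit_spec]
    exacts [hI, hconj]
end

section
/- Let n ≥ 1 and let a, b, c ∈ ℝ with a² + b² + c² = 1. Then the 2n-fold wedge power of the alternating 2-form ω_A = a·ω_I + b·ω_J + c·ω_K on ℝ^{4n} equals that of ω_I: (a ω_I + b ω_J + c ω_K)^{∧ 2n} = ω_I^{∧ 2n} as alternating 4n-forms on ℝ^{4n}. -/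
noncomputable section

open ExteriorAlgebra

/-- The coordinate covector `dx₁⁽ˡ⁾` on `ℝ^{4n}`. -/
def dx1 (n : ℕ) (l : Fin n) : Module.Dual ℝ (R4Space n) :=
  LinearMap.proj l ∘ₗ LinearMap.fst ℝ (Fin n → ℝ) ((Fin n → ℝ) × (Fin n → ℝ) × (Fin n → ℝ))

/-- The coordinate covector `dx₂⁽ˡ⁾` on `ℝ^{4n}`. -/
def dx2 (n : ℕ) (l : Fin n) : Module.Dual ℝ (R4Space n) :=
  LinearMap.proj l ∘ₗ LinearMap.fst ℝ (Fin n → ℝ) ((Fin n → ℝ) × (Fin n → ℝ)) ∘ₗ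
    LinearMap.snd ℝ (Fin n → ℝ) ((Fin n → ℝ) × (Fin n → ℝ) × (Fin n → ℝ))

/-- The coordinate covector `dx₃⁽ˡ⁾` on `ℝ^{4n}`. -/
def dx3 (n : ℕ) (l : Fin n) : Module.Dual ℝ (R4Space n) :=
  LinearMap.proj l ∘ₗ LinearMap.fst ℝ (Fin n → ℝ) (Fin n → ℝ) ∘ₗ
    LinearMap.snd ℝ (Fin n → ℝ) ((Fin n → ℝ) × (Fin n → ℝ)) ∘ₗ
    LinearMap.snd ℝ (Fin n → ℝ) ((Fin n → ℝ) × (Fin n → ℝ) × (Fin n → ℝ))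

/-- The coordinate covector `dx₄⁽ˡ⁾` on `ℝ^{4n}`. -/
def dx4 (n : ℕ) (l : Fin n) : Module.Dual ℝ (R4Space n) :=
  LinearMap.proj l ∘ₗ LinearMap.snd ℝ (Fin n → ℝ) (Fin n → ℝ) ∘ₗ
    LinearMap.snd ℝ (Fin n → ℝ) ((Fin n → ℝ) × (Fin n → ℝ)) ∘ₗ
    LinearMap.snd ℝ (Fin n → ℝ) ((Fin n → ℝ) × (Fin n → ℝ) × (Fin n → ℝ))

/-- The Kähler form `ω_I = Σ_l dx₁⁽ˡ⁾∧dx₂⁽ˡ⁾ + dx₃⁽ˡ⁾∧dx₄⁽ˡ⁾`, as an element of degree two of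
the exterior algebra of the dual of `ℝ^{4n}` (the algebra of alternating forms). -/
def omegaI (n : ℕ) : ExteriorAlgebra ℝ (Module.Dual ℝ (R4Space n)) :=
  ∑ l, (ι ℝ (dx1 n l) * ι ℝ (dx2 n l) + ι ℝ (dx3 n l) * ι ℝ (dx4 n l))

/-- The Kähler form `ω_J = Σ_l dx₁⁽ˡ⁾∧dx₃⁽ˡ⁾ + dx₄⁽ˡ⁾∧dx₂⁽ˡ⁾`. -/
def omegaJ (n : ℕ) : ExteriorAlgebra ℝ (Module.Dual ℝ (R4Space n)) :=
  ∑ l, (ι ℝ (dx1 n l) * ι ℝ (dx3 n l) + ι ℝ (dx4 n l) * ι ℝ (dx2 n l))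

/-- The Kähler form `ω_K = Σ_l dx₁⁽ˡ⁾∧dx₄⁽ˡ⁾ + dx₂⁽ˡ⁾∧dx₃⁽ˡ⁾`. -/
def omegaK (n : ℕ) : ExteriorAlgebra ℝ (Module.Dual ℝ (R4Space n)) :=
  ∑ l, (ι ℝ (dx1 n l) * ι ℝ (dx4 n l) + ι ℝ (dx2 n l) * ι ℝ (dx3 n l))

lemma pow_vanish {A : Type*} [Ring A] {ι' : Type*} [DecidableEq ι'] (F : Finset ι') (x : ι' → A)
    (hc : ∀ i ∈ F, ∀ j ∈ F, Commute (x i) (x j))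
    (h3 : ∀ i ∈ F, x i ^ 3 = 0) :
    (∑ i ∈ F, x i) ^ (2 * F.card + 1) = 0 := by
  induction F using Finset.induction_on with
  | empty => simp
  | @insert a s ha ih =>
    have hc' : ∀ i ∈ s, ∀ j ∈ s, Commute (x i) (x j) := fun i hi j hj =>
      hc i (Finset.mem_insert_of_mem hi) j (Finset.mem_insert_of_mem hj)
    have h3' : ∀ i ∈ s, x i ^ 3 = 0 := fun i hi => h3 i (Finset.mem_insert_of_mem hi)
    have hT : (∑ i ∈ s, x i) ^ (2 * s.card + 1) = 0 := ih hc' h3'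
    have hcomm : Commute (x a) (∑ i ∈ s, x i) :=
      Commute.sum_right _ _ _ (fun i hi =>
        hc a (Finset.mem_insert_self a s) i (Finset.mem_insert_of_mem hi))
    rw [Finset.sum_insert ha, Finset.card_insert_of_notMem ha]
    have hev : 2 * (s.card + 1) + 1 = (2 * s.card + 3) := by ring
    rw [hev, hcomm.add_pow]
    apply Finset.sum_eq_zero
    intro k hk
    rcases le_or_gt 3 k with h | h
    · have : x a ^ k = 0 := pow_eq_zero_of_le h (h3 a (Finset.mem_insert_self a s))
      rw [this, zero_mul, zero_mul]
    · have hle : 2 * s.card + 1 ≤ 2 * s.card + 3 - k := by omega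
      have : (∑ i ∈ s, x i) ^ (2 * s.card + 3 - k) = 0 := pow_eq_zero_of_le hle hT
      rw [this, mul_zero, zero_mul]

lemma pow_eq_of_sq_eq {A : Type*} [Ring A] {ι' : Type*} [DecidableEq ι'] (F : Finset ι')
    (x y : ι' → A)
    (hcx : ∀ i ∈ F, ∀ j ∈ F, Commute (x i) (x j))
    (hcy : ∀ i ∈ F, ∀ j ∈ F, Commute (y i) (y j))
    (hx3 : ∀ i ∈ F, x i ^ 3 = 0) (hy3 : ∀ i ∈ F, y i ^ 3 = 0)
    (hsq : ∀ i ∈ F, x i ^ 2 = y i ^ 2) :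
    (∑ i ∈ F, x i) ^ (2 * F.card) = (∑ i ∈ F, y i) ^ (2 * F.card) := by
  induction F using Finset.induction_on with
  | empty => simp
  | @insert a s ha ih =>
    have amem := Finset.mem_insert_self a s
    have key : ∀ z : ι' → A, (∀ i ∈ insert a s, ∀ j ∈ insert a s, Commute (z i) (z j)) →
        (∀ i ∈ insert a s, z i ^ 3 = 0) →
        (∑ i ∈ insert a s, z i) ^ (2 * (insert a s).card)
          = z a ^ 2 * (∑ i ∈ s, z i) ^ (2 * s.card) * ((2 * s.card + 2).choose 2 : A) := by
      intro z hcz hz3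
      have hc' : ∀ i ∈ s, ∀ j ∈ s, Commute (z i) (z j) := fun i hi j hj =>
        hcz i (Finset.mem_insert_of_mem hi) j (Finset.mem_insert_of_mem hj)
      have h3' : ∀ i ∈ s, z i ^ 3 = 0 := fun i hi => hz3 i (Finset.mem_insert_of_mem hi)
      have hT : (∑ i ∈ s, z i) ^ (2 * s.card + 1) = 0 := pow_vanish s z hc' h3'
      have hcomm : Commute (z a) (∑ i ∈ s, z i) :=
        Commute.sum_right _ _ _ (fun i hi =>
          hcz a amem i (Finset.mem_insert_of_mem hi))
      rw [Finset.sum_insert ha, Finset.card_insert_of_notMem ha]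
      have hev : 2 * (s.card + 1) = 2 * s.card + 2 := by ring
      rw [hev, hcomm.add_pow]
      rw [Finset.sum_eq_single 2]
      · norm_num
      · intro k hk hk2
        rcases le_or_gt 3 k with h | h
        · have : z a ^ k = 0 := pow_eq_zero_of_le h (hz3 a amem)
          rw [this, zero_mul, zero_mul]
        · have hle : 2 * s.card + 1 ≤ 2 * s.card + 2 - k := by
            interval_cases k <;> omega
          have : (∑ i ∈ s, z i) ^ (2 * s.card + 2 - k) = 0 := pow_eq_zero_of_le hle hT
          rw [this, mul_zero, zero_mul]
      · intro h2
        exact absurd (Finset.mem_range.mpr (by omega)) h2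
    rw [key x hcx hx3, key y hcy hy3, hsq a amem,
      ih (fun i hi j hj => hcx i (Finset.mem_insert_of_mem hi) j (Finset.mem_insert_of_mem hj))
         (fun i hi j hj => hcy i (Finset.mem_insert_of_mem hi) j (Finset.mem_insert_of_mem hj))
         (fun i hi => hx3 i (Finset.mem_insert_of_mem hi))
         (fun i hi => hy3 i (Finset.mem_insert_of_mem hi))
         (fun i hi => hsq i (Finset.mem_insert_of_mem hi))]

section generic
variable {R : Type*} {M : Type*} [CommRing R] [AddCommGroup M] [Module R M]

lemma ι_neg_swap (x y : M) : ι R x * ι R y = -(ι R y * ι R x) :=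
  eq_neg_of_add_eq_zero_left (ι_add_mul_swap x y)

lemma swap_head (x y : M) (t : ExteriorAlgebra R M) :
    ι R x * (ι R y * t) = -(ι R y * (ι R x * t)) := by
  rw [← mul_assoc, ι_neg_swap, neg_mul, mul_assoc]

lemma ι_mid_comm (x y z : M) :
    ι R x * (ι R y * ι R z) = ι R y * ι R z * ι R x := by
  rw [swap_head, ι_neg_swap x z, mul_neg, neg_neg, mul_assoc]

lemma ι_pair_commute (u v w z : M) :
    Commute (ι R u * ι R v) (ι R w * ι R z) := by
  show _ = _
  calc ι R u * ι R v * (ι R w * ι R z)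
      = ι R u * (ι R v * (ι R w * ι R z)) := by rw [mul_assoc]
    _ = ι R u * (ι R w * ι R z * ι R v) := by rw [ι_mid_comm]
    _ = ι R u * (ι R w * ι R z) * ι R v := by simp only [mul_assoc]
    _ = ι R w * ι R z * ι R u * ι R v := by rw [ι_mid_comm]
    _ = ι R w * ι R z * (ι R u * ι R v) := by rw [mul_assoc]

lemma h1 (u v w : M) : ι R u * ι R v * (ι R u * ι R w) = 0 := by
  rw [mul_assoc, swap_head v u, mul_neg, ← mul_assoc, ← mul_assoc, ι_sq_zero,
    zero_mul, zero_mul, neg_zero]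

lemma h3 (u v w : M) : ι R u * ι R v * (ι R v * ι R w) = 0 := by
  rw [mul_assoc, ← mul_assoc (ι R v), ι_sq_zero, zero_mul, mul_zero]

lemma h2 (u v w : M) : ι R u * ι R v * (ι R w * ι R u) = 0 := by
  rw [ι_neg_swap w u, mul_neg, h1, neg_zero]

lemma h4 (u v w : M) : ι R u * ι R v * (ι R w * ι R v) = 0 := by
  rw [ι_neg_swap w v, mul_neg, h3, neg_zero]

lemma hP0 (u v : M) : ι R u * ι R v * (ι R u * ι R v) = 0 := h1 u v v

lemma reorderK (x1 x2 x3 x4 : M) :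
    ι R x1 * ι R x4 * (ι R x2 * ι R x3) = ι R x1 * ι R x2 * (ι R x3 * ι R x4) := by
  have h : ι R x4 * (ι R x2 * ι R x3) = ι R x2 * (ι R x3 * ι R x4) := by
    rw [swap_head x4 x2, ι_neg_swap x4 x3, mul_neg, neg_neg]
  rw [mul_assoc, h, mul_assoc]

lemma reorderJ (x1 x2 x3 x4 : M) :
    ι R x1 * ι R x3 * (ι R x4 * ι R x2) = ι R x1 * ι R x2 * (ι R x3 * ι R x4) := by
  have h : ι R x3 * (ι R x4 * ι R x2) = ι R x2 * (ι R x3 * ι R x4) := by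
    calc ι R x3 * (ι R x4 * ι R x2)
        = -(ι R x4 * (ι R x3 * ι R x2)) := swap_head _ _ _
      _ = -(ι R x4 * (-(ι R x2 * ι R x3))) := by rw [ι_neg_swap x3 x2]
      _ = ι R x4 * (ι R x2 * ι R x3) := by rw [mul_neg, neg_neg]
      _ = -(ι R x2 * (ι R x4 * ι R x3)) := swap_head _ _ _
      _ = -(ι R x2 * (-(ι R x3 * ι R x4))) := by rw [ι_neg_swap x4 x3]
      _ = ι R x2 * (ι R x3 * ι R x4) := by rw [mul_neg, neg_neg]
  rw [mul_assoc, h, mul_assoc]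

lemma sq_pairs0 {A : Type*} [Ring A] (P Q : A) (hP : P * P = 0) (hQ : Q * Q = 0)
    (hQP : Q * P = P * Q) : (P + Q) * (P + Q) = P * Q + P * Q := by
  rw [add_mul, mul_add, mul_add, hP, hQ, hQP]; abel

lemma cross0 {A : Type*} [Ring A] (P Q S T : A) (k1 : P * S = 0) (k2 : P * T = 0)
    (k3 : Q * S = 0) (k4 : Q * T = 0) : (P + Q) * (S + T) = 0 := by
  rw [add_mul, mul_add, mul_add, k1, k2, k3, k4]; simp

lemma comm_add {A : Type*} [Ring A] {p q r s : A} (c1 : Commute p r) (c2 : Commute p s)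
    (c3 : Commute q r) (c4 : Commute q s) : Commute (p + q) (r + s) :=
  (c1.add_right c2).add_left (c3.add_right c4)

lemma comm_pairsum (u v w z u' v' w' z' : M) :
    Commute (ι R u * ι R v + ι R w * ι R z) (ι R u' * ι R v' + ι R w' * ι R z') :=
  comm_add (ι_pair_commute _ _ _ _) (ι_pair_commute _ _ _ _)
    (ι_pair_commute _ _ _ _) (ι_pair_commute _ _ _ _)

end generic

section blocks
variable {M : Type*} [AddCommGroup M] [Module ℝ M] (e1 e2 e3 e4 : M)

local notation "E" => ExteriorAlgebra ℝ M

def Iform : E := ι ℝ e1 * ι ℝ e2 + ι ℝ e3 * ι ℝ e4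
def Jform : E := ι ℝ e1 * ι ℝ e3 + ι ℝ e4 * ι ℝ e2
def Kform : E := ι ℝ e1 * ι ℝ e4 + ι ℝ e2 * ι ℝ e3
def Vform : E := ι ℝ e1 * ι ℝ e2 * (ι ℝ e3 * ι ℝ e4)

lemma Isq : Iform e1 e2 e3 e4 * Iform e1 e2 e3 e4 = Vform e1 e2 e3 e4 + Vform e1 e2 e3 e4 :=
  sq_pairs0 _ _ (hP0 _ _) (hP0 _ _) (ι_pair_commute e3 e4 e1 e2).eq

lemma Jsq : Jform e1 e2 e3 e4 * Jform e1 e2 e3 e4 = Vform e1 e2 e3 e4 + Vform e1 e2 e3 e4 := by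
  rw [Jform, sq_pairs0 _ _ (hP0 _ _) (hP0 _ _) (ι_pair_commute e4 e2 e1 e3).eq,
    reorderJ e1 e2 e3 e4]; rfl

lemma Ksq : Kform e1 e2 e3 e4 * Kform e1 e2 e3 e4 = Vform e1 e2 e3 e4 + Vform e1 e2 e3 e4 := by
  rw [Kform, sq_pairs0 _ _ (hP0 _ _) (hP0 _ _) (ι_pair_commute e2 e3 e1 e4).eq,
    reorderK e1 e2 e3 e4]; rfl

lemma IJzero : Iform e1 e2 e3 e4 * Jform e1 e2 e3 e4 = 0 :=
  cross0 _ _ _ _ (h1 e1 e2 e3) (h4 e1 e2 e4) (h2 e3 e4 e1) (h3 e3 e4 e2)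

lemma IKzero : Iform e1 e2 e3 e4 * Kform e1 e2 e3 e4 = 0 :=
  cross0 _ _ _ _ (h1 e1 e2 e4) (h3 e1 e2 e3) (h4 e3 e4 e1) (h2 e3 e4 e2)

lemma JKzero : Jform e1 e2 e3 e4 * Kform e1 e2 e3 e4 = 0 :=
  cross0 _ _ _ _ (h1 e1 e3 e4) (h4 e1 e3 e2) (h2 e4 e2 e1) (h3 e4 e2 e3)

lemma commIJ : Commute (Iform e1 e2 e3 e4) (Jform e1 e2 e3 e4) := comm_pairsum _ _ _ _ _ _ _ _
lemma commIK : Commute (Iform e1 e2 e3 e4) (Kform e1 e2 e3 e4) := comm_pairsum _ _ _ _ _ _ _ _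
lemma commJK : Commute (Jform e1 e2 e3 e4) (Kform e1 e2 e3 e4) := comm_pairsum _ _ _ _ _ _ _ _

lemma IVzero : Iform e1 e2 e3 e4 * Vform e1 e2 e3 e4 = 0 := by
  rw [Iform, Vform, add_mul, ← mul_assoc, hP0, zero_mul, ← mul_assoc,
    (ι_pair_commute e3 e4 e1 e2).eq, mul_assoc, hP0, mul_zero, add_zero]

lemma JVzero : Jform e1 e2 e3 e4 * Vform e1 e2 e3 e4 = 0 := by
  have t1 : ι ℝ e1 * ι ℝ e3 * (ι ℝ e1 * ι ℝ e2 * (ι ℝ e3 * ι ℝ e4)) = 0 := by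
    rw [← mul_assoc, h1 e1 e3 e2, zero_mul]
  have t2 : ι ℝ e4 * ι ℝ e2 * (ι ℝ e1 * ι ℝ e2 * (ι ℝ e3 * ι ℝ e4)) = 0 := by
    rw [← mul_assoc, h4 e4 e2 e1, zero_mul]
  rw [Jform, Vform, add_mul, t1, t2, add_zero]

lemma KVzero : Kform e1 e2 e3 e4 * Vform e1 e2 e3 e4 = 0 := by
  have t1 : ι ℝ e1 * ι ℝ e4 * (ι ℝ e1 * ι ℝ e2 * (ι ℝ e3 * ι ℝ e4)) = 0 := by
    rw [← mul_assoc, h1 e1 e4 e2, zero_mul]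
  have t2 : ι ℝ e2 * ι ℝ e3 * (ι ℝ e1 * ι ℝ e2 * (ι ℝ e3 * ι ℝ e4)) = 0 := by
    rw [← mul_assoc, h2 e2 e3 e1, zero_mul]
  rw [Kform, Vform, add_mul, t1, t2, add_zero]

lemma expand3 {A : Type*} [Ring A] [Algebra ℝ A] (a b c : ℝ) (x y z : A) :
    (a • x + b • y + c • z) * (a • x + b • y + c • z)
      = (a * a) • (x * x) + (a * b) • (y * x) + (a * c) • (z * x)
        + (b * a) • (x * y) + (b * b) • (y * y) + (b * c) • (z * y)
        + (c * a) • (x * z) + (c * b) • (y * z) + (c * c) • (z * z) := by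
  simp only [add_mul, mul_add, smul_mul_assoc, mul_smul_comm, smul_smul, smul_add]
  abel

lemma Asq (a b c : ℝ) (habc : a ^ 2 + b ^ 2 + c ^ 2 = 1) :
    (a • Iform e1 e2 e3 e4 + b • Jform e1 e2 e3 e4 + c • Kform e1 e2 e3 e4)
      * (a • Iform e1 e2 e3 e4 + b • Jform e1 e2 e3 e4 + c • Kform e1 e2 e3 e4)
      = Iform e1 e2 e3 e4 * Iform e1 e2 e3 e4 := by
  rw [expand3, IJzero, IKzero, JKzero,
    (commIJ e1 e2 e3 e4).eq.symm.trans (IJzero e1 e2 e3 e4),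
    (commIK e1 e2 e3 e4).eq.symm.trans (IKzero e1 e2 e3 e4),
    (commJK e1 e2 e3 e4).eq.symm.trans (JKzero e1 e2 e3 e4),
    Isq, Jsq, Ksq]
  simp only [smul_zero, add_zero, zero_add]
  rw [← add_smul, ← add_smul]
  have : a * a + b * b + c * c = 1 := by rw [← pow_two, ← pow_two, ← pow_two]; exact habc
  rw [this, one_smul]

lemma AVzero (a b c : ℝ) :
    (a • Iform e1 e2 e3 e4 + b • Jform e1 e2 e3 e4 + c • Kform e1 e2 e3 e4)
      * Vform e1 e2 e3 e4 = 0 := by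
  rw [add_mul, add_mul, smul_mul_assoc, smul_mul_assoc, smul_mul_assoc,
    IVzero, JVzero, KVzero]
  simp

lemma Acube (a b c : ℝ) (habc : a ^ 2 + b ^ 2 + c ^ 2 = 1) :
    (a • Iform e1 e2 e3 e4 + b • Jform e1 e2 e3 e4 + c • Kform e1 e2 e3 e4) ^ 3 = 0 := by
  set x := a • Iform e1 e2 e3 e4 + b • Jform e1 e2 e3 e4 + c • Kform e1 e2 e3 e4 with hx
  have : x ^ 3 = x * (x * x) := by rw [pow_succ', pow_two]
  rw [this, Asq e1 e2 e3 e4 a b c habc, Isq, mul_add, AVzero, add_zero]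

lemma Icube : Iform e1 e2 e3 e4 ^ 3 = 0 := by
  have : Iform e1 e2 e3 e4 ^ 3 = Iform e1 e2 e3 e4 * (Iform e1 e2 e3 e4 * Iform e1 e2 e3 e4) := by
    rw [pow_succ', pow_two]
  rw [this, Isq, mul_add, IVzero, add_zero]

end blocks

set_option maxHeartbeats 2000000 in
set_option synthInstance.maxHeartbeats 1000000 in
/-- For every unit vector `(a,b,c) ∈ ℝ³`, the top wedge power of the Kähler
form `ω_A = a ω_I + b ω_J + c ω_K` of the induced complex structure `A = aI+bJ+cK` on `ℝ^{4n}`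
equals that of `ω_I`: `(a ω_I + b ω_J + c ω_K)^{2n} = ω_I^{2n}`. -/
theorem wedge_power_omega_invariant (n : ℕ) (hn : 1 ≤ n) (a b c : ℝ)
    (habc : a ^ 2 + b ^ 2 + c ^ 2 = 1) :
    (a • omegaI n + b • omegaJ n + c • omegaK n) ^ (2 * n) = omegaI n ^ (2 * n) := by
  classical
  have hI : omegaI n = ∑ l, Iform (dx1 n l) (dx2 n l) (dx3 n l) (dx4 n l) := rfl
  have hJ : omegaJ n = ∑ l, Jform (dx1 n l) (dx2 n l) (dx3 n l) (dx4 n l) := rfl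
  have hK : omegaK n = ∑ l, Kform (dx1 n l) (dx2 n l) (dx3 n l) (dx4 n l) := rfl
  have hsum : a • omegaI n + b • omegaJ n + c • omegaK n
      = ∑ l : Fin n, (a • Iform (dx1 n l) (dx2 n l) (dx3 n l) (dx4 n l)
        + b • Jform (dx1 n l) (dx2 n l) (dx3 n l) (dx4 n l)
        + c • Kform (dx1 n l) (dx2 n l) (dx3 n l) (dx4 n l)) := by
    rw [hI, hJ, hK, Finset.smul_sum, Finset.smul_sum, Finset.smul_sum,
      ← Finset.sum_add_distrib, ← Finset.sum_add_distrib]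
  have key := pow_eq_of_sq_eq (Finset.univ : Finset (Fin n))
    (fun l => a • Iform (dx1 n l) (dx2 n l) (dx3 n l) (dx4 n l)
        + b • Jform (dx1 n l) (dx2 n l) (dx3 n l) (dx4 n l)
        + c • Kform (dx1 n l) (dx2 n l) (dx3 n l) (dx4 n l))
    (fun l => Iform (dx1 n l) (dx2 n l) (dx3 n l) (dx4 n l))
    (by
      intro i _ j _
      refine Commute.add_left (Commute.add_left ?_ ?_) ?_ <;>
        refine Commute.add_right (Commute.add_right ?_ ?_) ?_ <;>
        exact ((comm_pairsum _ _ _ _ _ _ _ _).smul_right _).smul_left _)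
    (by intro i _ j _; exact comm_pairsum _ _ _ _ _ _ _ _)
    (fun i _ => Acube _ _ _ _ a b c habc)
    (fun i _ => Icube _ _ _ _)
    (by
      intro i _
      rw [pow_two, pow_two]
      exact Asq _ _ _ _ a b c habc)
  rw [Finset.card_univ, Fintype.card_fin] at key
  rw [hsum, hI]
  exact key
end
end

section
/- Let n ≥ 1 and define F : ℝ^{4n} × ℂ → ℂ^{2n+1} by F(x, ζ) = (z + ζ·w̄, w − ζ·z̄, ζ), where x = (x₁,x₂,x₃,x₄) with x_m ∈ ℝⁿ, z = x₁ + i x₂ ∈ ℂⁿ, w = x₃ + i x₄ ∈ ℂⁿ. Then F is smooth, and at every point (x,ζ) its real Fréchet derivative D = DF(x,ζ) : ℝ^{4n} × ℂ → ℂ^{2n+1} satisfies D(A·X, i·V) = i·D(X, V) for all X ∈ ℝ^{4n} and V ∈ ℂ, where A = a·I + b·J + c·K with a = (1 − |ζ|²)/(1 + |ζ|²), b = −i(ζ − ζ̄)/(1 + |ζ|²), c = −(ζ + ζ̄)/(1 + |ζ|²) (note b, c are real). That is, the twistor coordinates (v, ξ, ζ) = (z + ζw̄, w − ζz̄, ζ)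 are holomorphic for the complex structure (aI + bJ + cK) ⊕ i on ℝ^{4n} × ℂ. -/
noncomputable section

open Complex

/-- The twistor coordinate chart `F : ℝ^{4n} × ℂ → ℂ^{2n+1}`, `F(x,ζ) = (z + ζw̄, w − ζz̄, ζ)`
where `z = x₁ + ix₂`, `w = x₃ + ix₄`. -/
def twistorChart (n : ℕ) : R4Space n × ℂ → (Fin n → ℂ) × (Fin n → ℂ) × ℂ := fun q =>
  (fun l => ((q.1.1 l : ℂ) + (q.1.2.1 l : ℂ) * Complex.I) +
      q.2 * (starRingEnd ℂ) ((q.1.2.2.1 l : ℂ) + (q.1.2.2.2 l : ℂ) * Complex.I),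
   fun l => ((q.1.2.2.1 l : ℂ) + (q.1.2.2.2 l : ℂ) * Complex.I) -
      q.2 * (starRingEnd ℂ) ((q.1.1 l : ℂ) + (q.1.2.1 l : ℂ) * Complex.I),
   q.2)

def φ1 (n : ℕ) (l : Fin n) : (R4Space n × ℂ) →L[ℝ] ℂ where
  toFun q := (q.1.1 l : ℂ)
  map_add' p q := by simp
  map_smul' c p := by simp
  cont := by fun_prop

def φ2 (n : ℕ) (l : Fin n) : (R4Space n × ℂ) →L[ℝ] ℂ where
  toFun q := (q.1.2.1 l : ℂ)
  map_add' p q := by simp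
  map_smul' c p := by simp
  cont := by fun_prop

def φ3 (n : ℕ) (l : Fin n) : (R4Space n × ℂ) →L[ℝ] ℂ where
  toFun q := (q.1.2.2.1 l : ℂ)
  map_add' p q := by simp
  map_smul' c p := by simp
  cont := by fun_prop

def φ4 (n : ℕ) (l : Fin n) : (R4Space n × ℂ) →L[ℝ] ℂ where
  toFun q := (q.1.2.2.2 l : ℂ)
  map_add' p q := by simp
  map_smul' c p := by simp
  cont := by fun_prop

def ζc (n : ℕ) : (R4Space n × ℂ) →L[ℝ] ℂ := ContinuousLinearMap.snd ℝ (R4Space n) ℂ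

lemma twistorChart_eq (n : ℕ) : twistorChart n = fun q =>
    (fun l => (q.1.1 l : ℂ) + (q.1.2.1 l : ℂ) * Complex.I +
        q.2 * ((q.1.2.2.1 l : ℂ) - (q.1.2.2.2 l : ℂ) * Complex.I),
     fun l => (q.1.2.2.1 l : ℂ) + (q.1.2.2.2 l : ℂ) * Complex.I -
        q.2 * ((q.1.1 l : ℂ) - (q.1.2.1 l : ℂ) * Complex.I),
     q.2) := by
  funext q
  simp [twistorChart, map_add, map_mul, Complex.conj_ofReal, Complex.conj_I, sub_eq_add_neg,
    mul_neg]

def Dtw (n : ℕ) (x : R4Space n) (ζ : ℂ) :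
    (R4Space n × ℂ) →L[ℝ] (Fin n → ℂ) × (Fin n → ℂ) × ℂ :=
  (ContinuousLinearMap.pi fun l =>
      (φ1 n l + Complex.I • φ2 n l) +
        (ζ • (φ3 n l - Complex.I • φ4 n l) +
          ((x.2.2.1 l : ℂ) - (x.2.2.2 l : ℂ) * Complex.I) • ζc n)).prod
  ((ContinuousLinearMap.pi fun l =>
      (φ3 n l + Complex.I • φ4 n l) -
        (ζ • (φ1 n l - Complex.I • φ2 n l) +
          ((x.1 l : ℂ) - (x.2.1 l : ℂ) * Complex.I) • ζc n)).prod (ζc n))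

lemma hasFDerivAt_tw (n : ℕ) (x : R4Space n) (ζ : ℂ) :
    HasFDerivAt (twistorChart n) (Dtw n x ζ) (x, ζ) := by
  rw [twistorChart_eq]
  refine HasFDerivAt.prodMk ?_ (HasFDerivAt.prodMk ?_ (ζc n).hasFDerivAt)
  · apply hasFDerivAt_pi.2
    intro l
    have h := (((φ1 n l).hasFDerivAt (x := (x, ζ))).add
        ((((φ2 n l).hasFDerivAt (x := (x, ζ)))).mul_const Complex.I)).add
      (((ζc n).hasFDerivAt (x := (x, ζ))).mul
        ((((φ3 n l).hasFDerivAt (x := (x, ζ)))).sub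
          ((((φ4 n l).hasFDerivAt (x := (x, ζ)))).mul_const Complex.I)))
    convert h using 1 <;> rfl
  · apply hasFDerivAt_pi.2
    intro l
    have h := (((φ3 n l).hasFDerivAt (x := (x, ζ))).add
        ((((φ4 n l).hasFDerivAt (x := (x, ζ)))).mul_const Complex.I)).sub
      (((ζc n).hasFDerivAt (x := (x, ζ))).mul
        ((((φ1 n l).hasFDerivAt (x := (x, ζ)))).sub
          ((((φ2 n l).hasFDerivAt (x := (x, ζ)))).mul_const Complex.I)))
    convert h using 1 <;> rfl

lemma contDiff_tw (n : ℕ) : ContDiff ℝ (⊤ : ℕ∞) (twistorChart n) := by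
  rw [twistorChart_eq]
  refine ContDiff.prodMk ?_ (ContDiff.prodMk ?_ ?_)
  · exact contDiff_pi.2 fun l =>
      (((φ1 n l).contDiff.add ((φ2 n l).contDiff.mul contDiff_const)).add
        ((ζc n).contDiff.mul ((φ3 n l).contDiff.sub ((φ4 n l).contDiff.mul contDiff_const))))
  · exact contDiff_pi.2 fun l =>
      (((φ3 n l).contDiff.add ((φ4 n l).contDiff.mul contDiff_const)).sub
        ((ζc n).contDiff.mul ((φ1 n l).contDiff.sub ((φ2 n l).contDiff.mul contDiff_const))))
  · exact (ζc n).contDiff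



set_option maxHeartbeats 2000000 in
/-- The twistor chart `F(x,ζ) = (z+ζw̄, w−ζz̄, ζ)` is smooth, and at every
point `(x,ζ)` its real Fréchet derivative `D` intertwines the complex structure
`(aI+bJ+cK) ⊕ i` on `ℝ^{4n} × ℂ` (where `a = (1−|ζ|²)/(1+|ζ|²)`, `b = 2 Im ζ/(1+|ζ|²)
 = −i(ζ−ζ̄)/(1+|ζ|²)`, `c = −2 Re ζ/(1+|ζ|²) = −(ζ+ζ̄)/(1+|ζ|²)`) with multiplication by `i`
on `ℂ^{2n+1}`: `D(AX, iV) = i·D(X,V)`.  That is, `(v,ξ,ζ)` are holomorphic coordinates for the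
twistor complex structure. -/
theorem twistorChart_holomorphic (n : ℕ) (hn : 1 ≤ n) :
    ContDiff ℝ (⊤ : ℕ∞) (twistorChart n) ∧
    ∀ (x : R4Space n) (ζ : ℂ) (X : R4Space n) (V : ℂ),
      fderiv ℝ (twistorChart n) (x, ζ)
        ((((1 - Complex.normSq ζ) / (1 + Complex.normSq ζ)) • Iop n +
          (2 * ζ.im / (1 + Complex.normSq ζ)) • Jop n +
          (-(2 * ζ.re) / (1 + Complex.normSq ζ)) • Kop n) X, Complex.I * V)
      = Complex.I • fderiv ℝ (twistorChart n) (x, ζ) (X, V) := by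
  refine ⟨contDiff_tw n, fun x ζ X V => ?_⟩
  rw [(hasFDerivAt_tw n x ζ).fderiv]
  have hd : (1 : ℝ) + Complex.normSq ζ ≠ 0 := by have := Complex.normSq_nonneg ζ; linarith
  simp only [Dtw, Iop, Jop, Kop, LinearMap.add_apply, LinearMap.smul_apply, LinearMap.coe_mk,
    AddHom.coe_mk, ContinuousLinearMap.prod_apply, ContinuousLinearMap.pi_apply,
    ContinuousLinearMap.add_apply, ContinuousLinearMap.sub_apply,
    ContinuousLinearMap.smul_apply, Prod.smul_mk, Prod.mk_add_mk]
  refine Prod.ext ?_ (Prod.ext ?_ ?_)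
  · funext l
    simp only [ContinuousLinearMap.pi_apply, ContinuousLinearMap.add_apply,
      ContinuousLinearMap.sub_apply, ContinuousLinearMap.smul_apply, φ1, φ2, φ3, φ4, ζc,
      ContinuousLinearMap.coe_mk', LinearMap.coe_mk, AddHom.coe_mk, ContinuousLinearMap.coe_snd',
      Pi.add_apply, Pi.smul_apply, Pi.neg_apply, smul_eq_mul]
    rw [Complex.ext_iff]
    constructor <;>
    · simp only [Complex.add_re, Complex.mul_re, Complex.mul_im, Complex.sub_re, Complex.sub_im,
        Complex.add_im, Complex.neg_re, Complex.neg_im, Complex.I_re, Complex.I_im,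
        Complex.ofReal_re, Complex.ofReal_im, Complex.one_re, Complex.one_im]
      field_simp
      simp only [Complex.normSq_apply]
      ring
  · funext l
    simp only [ContinuousLinearMap.pi_apply, ContinuousLinearMap.add_apply,
      ContinuousLinearMap.sub_apply, ContinuousLinearMap.smul_apply, φ1, φ2, φ3, φ4, ζc,
      ContinuousLinearMap.coe_mk', LinearMap.coe_mk, AddHom.coe_mk, ContinuousLinearMap.coe_snd',
      Pi.add_apply, Pi.smul_apply, Pi.neg_apply, smul_eq_mul]
    rw [Complex.ext_iff]
    constructor <;>
    · simp only [Complex.add_re, Complex.mul_re, Complex.mul_im, Complex.sub_re, Complex.sub_im,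
        Complex.add_im, Complex.neg_re, Complex.neg_im, Complex.I_re, Complex.I_im,
        Complex.ofReal_re, Complex.ofReal_im, Complex.one_re, Complex.one_im]
      field_simp
      simp only [Complex.normSq_apply]
      ring
  · simp [ζc]
end
end

section
/- Let h : ℂ³ → ℂ be defined by h(v, ξ, ζ) = (v + v̄ − ζ·ξ̄ − ζ̄·ξ)/(1 + |ζ|²) (this is the function on the twistor family of ℝ⁴ induced by h₀(x₁,x₂,x₃,x₄) = 2x₁ via the twistor coordinates v = z + ζw̄, ξ = w − ζz̄ with z = x₁+ix₂, w = x₃+ix₄). Then for all v, ξ ∈ ℂ, the reduction ∫_ℂ h(v, ξ, ζ) · (π(1 + |ζ|²)²)^{−1} dμ(ζ) = Re(v), where dμ is Lebesgue measure on ℂ. -/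
/-!
The weight `(π(1+|ζ|²)²)⁻¹` is even in `ζ`, while the terms `ζξ̄ + ζ̄ξ` of the numerator of `h`
are odd, so averaging the integrand with its reflection `ζ ↦ -ζ` leaves
`2 Re v · (π(1+|ζ|²)³)⁻¹`; in polar coordinates `∫_ℂ (1+|ζ|²)⁻³ = π/2`, which gives `Re v`.
Since `h` is bounded and the weight is integrable, the symmetrization is legitimate.
-/

open MeasureTheory Complex

noncomputable section

/-- The function on the twistor family of `ℝ⁴` induced by `h₀(x₁,x₂,x₃,x₄) = 2x₁ = z + z̄`:
`h(v,ξ,ζ) = (v + v̄ − ζξ̄ − ζ̄ξ)/(1+|ζ|²)`. -/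
def hTw : ℂ × ℂ × ℂ → ℂ := fun p =>
  (p.1 + (starRingEnd ℂ) p.1 - p.2.2 * (starRingEnd ℂ) p.2.1 -
      (starRingEnd ℂ) p.2.2 * p.2.1) / ((1 + Complex.normSq p.2.2 : ℝ) : ℂ)

open Real Set Filter Topology ComplexConjugate

theorem integral_Ioi_mul_one_add_sq_rpow_neg {s : ℝ} (hs : 1 < s) :
    ∫ y in Ioi (0 : ℝ), y * (1 + y ^ 2) ^ (-s) = (2 * (s - 1))⁻¹ := by
  have hs' : 1 - s ≠ 0 := by linarith
  have hderiv (y : ℝ) (_ : y ∈ Ici (0 : ℝ)) :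
      HasDerivAt (fun y => (1 + y ^ 2) ^ (1 - s) / (2 * (1 - s))) (y * (1 + y ^ 2) ^ (-s)) y := by
    refine ((((hasDerivAt_pow 2 y).const_add 1).rpow_const (.inl (by positivity))).div_const
      _).congr_deriv ?_
    rw [sub_sub_cancel_left]
    field_simp
    norm_num [mul_comm]
  have hlim : Tendsto (fun y : ℝ => (1 + y ^ 2) ^ (1 - s) / (2 * (1 - s))) atTop (𝓝 0) := by
    have := (tendsto_rpow_neg_atTop (y := s - 1) (by linarith)).comp
      (tendsto_atTop_add_const_left _ 1 (tendsto_pow_atTop two_ne_zero))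
    simpa [Function.comp_def, neg_sub] using this.div_const (2 * (1 - s))
  rw [integral_Ioi_of_hasDerivAt_of_nonneg' hderiv
    (fun y hy => mul_nonneg (le_of_lt hy) (by positivity)) hlim,
    show 2 * (1 - s) = -(2 * (s - 1)) by ring]
  simp

theorem Complex.integral_one_add_norm_sq_rpow_neg {s : ℝ} (hs : 1 < s) :
    ∫ ζ : ℂ, (1 + ‖ζ‖ ^ 2) ^ (-s) = π / (s - 1) := by
  rw [integral_fun_norm_addHaar volume (fun y => (1 + y ^ 2) ^ (-s)), Complex.finrank_real_complex,
    measureReal_def, Complex.volume_ball]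
  norm_num only [pow_one, smul_eq_mul]
  rw [integral_Ioi_mul_one_add_sq_rpow_neg hs]
  have : s - 1 ≠ 0 := by linarith
  simp only [ENNReal.ofReal_one, one_pow, one_mul, ENNReal.coe_toReal, NNReal.coe_real_pi,
    nsmul_eq_mul, Nat.cast_ofNat]
  field_simp

theorem integral_eq_integral_half_add_comp_neg {G E : Type*} [AddGroup G] [MeasurableSpace G]
    [MeasurableNeg G] [NormedAddCommGroup E] [NormedSpace ℝ E] {μ : Measure G}
    [μ.IsNegInvariant] {f : G → E} (hf : Integrable f μ) :
    ∫ x, f x ∂μ = ∫ x, (2 : ℝ)⁻¹ • (f x + f (-x)) ∂μ := by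
  rw [integral_smul, integral_add hf hf.comp_neg, integral_neg_eq_self, ← two_smul ℝ, smul_smul,
    inv_mul_cancel₀ two_ne_zero, one_smul]

theorem measurable_hTw : Measurable hTw := by
  unfold hTw
  fun_prop

theorem norm_hTw_le (v ξ ζ : ℂ) : ‖hTw (v, ξ, ζ)‖ ≤ 2 * ‖v‖ + ‖ξ‖ := by
  have hpos : 0 < 1 + ‖ζ‖ ^ 2 := by positivity
  simp only [hTw]
  rw [norm_div, norm_real, normSq_eq_norm_sq, Real.norm_of_nonneg hpos.le, div_le_iff₀ hpos]
  calc _ ≤ ‖v‖ + ‖conj v‖ + ‖ζ * conj ξ‖ + ‖conj ζ * ξ‖ :=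
        norm_sub_le_of_le (norm_sub_le_of_le (norm_add_le _ _) le_rfl) le_rfl
    _ = 2 * ‖v‖ + 2 * ‖ζ‖ * ‖ξ‖ := by simp only [norm_mul, RCLike.norm_conj]; ring
    _ ≤ (2 * ‖v‖ + ‖ξ‖) * (1 + ‖ζ‖ ^ 2) := by
        nlinarith [norm_nonneg v, norm_nonneg ξ, mul_nonneg (norm_nonneg ξ) (sq_nonneg (‖ζ‖ - 1))]

theorem hTw_add_hTw_neg (v ξ ζ : ℂ) :
    hTw (v, ξ, ζ) + hTw (v, ξ, -ζ) = ((4 * v.re / (1 + normSq ζ) : ℝ) : ℂ) := by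
  simp only [hTw, normSq_neg, map_neg, ← add_div]
  rw [ofReal_div]
  congr 1
  rw [show (4 * v.re : ℝ) = 2 * (2 * v.re) by ring, ofReal_mul, ← add_conj]
  push_cast
  ring

theorem integrable_inv_pi_mul_one_add_normSq_sq :
    Integrable (fun ζ : ℂ => (π * (1 + normSq ζ) ^ 2)⁻¹) := by
  have := (integrable_rpow_neg_one_add_norm_sq (E := ℂ) (μ := volume) (r := 4)
    (by rw [Complex.finrank_real_complex]; norm_num)).const_mul π⁻¹
  refine this.congr (.of_forall fun ζ => ?_)
  dsimp only
  rw [normSq_eq_norm_sq, show -(4 : ℝ) / 2 = -(2 : ℕ) by norm_num, rpow_neg (by positivity),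
    rpow_natCast, mul_inv]

theorem integrable_hTw_mul_inv_pi_mul_one_add_normSq_sq (v ξ : ℂ) :
    Integrable fun ζ : ℂ => hTw (v, ξ, ζ) * ((π * (1 + normSq ζ) ^ 2 : ℝ) : ℂ)⁻¹ :=
  Integrable.bdd_mul (by simpa using integrable_inv_pi_mul_one_add_normSq_sq.ofReal (𝕜 := ℂ))
    (measurable_hTw.comp (by fun_prop)).aestronglyMeasurable
    (.of_forall fun ζ => norm_hTw_le v ξ ζ)

/-- The reduction in `ζ` of the twistor symbol of `2x₁` is `Re v`:
`∫_ℂ h(v,ξ,ζ) (π(1+|ζ|²)²)⁻¹ dμ(ζ) = Re v` for all `v, ξ ∈ ℂ`. -/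
theorem reduction_of_two_x1 (v ξ : ℂ) :
    ∫ ζ : ℂ, hTw (v, ξ, ζ) * ((Real.pi * (1 + Complex.normSq ζ) ^ 2 : ℝ) : ℂ)⁻¹
      = ((v.re : ℝ) : ℂ) := by
  have hsymm (ζ : ℂ) : (2 : ℝ)⁻¹ • (hTw (v, ξ, ζ) * ((π * (1 + normSq ζ) ^ 2 : ℝ) : ℂ)⁻¹ +
      hTw (v, ξ, -ζ) * ((π * (1 + normSq (-ζ)) ^ 2 : ℝ) : ℂ)⁻¹) =
      ((2 * v.re / π * (1 + ‖ζ‖ ^ 2) ^ (-3 : ℝ) : ℝ) : ℂ) := by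
    rw [normSq_neg, ← add_mul, hTw_add_hTw_neg, normSq_eq_norm_sq,
      show (-3 : ℝ) = -(3 : ℕ) by norm_num, rpow_neg (by positivity), rpow_natCast, real_smul]
    push_cast
    field_simp
    ring
  rw [integral_eq_integral_half_add_comp_neg
    (integrable_hTw_mul_inv_pi_mul_one_add_normSq_sq v ξ)]
  simp only [hsymm]
  rw [integral_complex_ofReal, integral_const_mul,
    Complex.integral_one_add_norm_sq_rpow_neg (by norm_num)]
  field_simp
  norm_num
end
end
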